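/- arXiv:2202.13141 — 6 statements merged into one kernel-verified Lean document; each statement's English description precedes it below -/
import Mathlib

section
/- Let H = (V,E) be a proper Eulerian hypergraph, let 𝒱 be its valid Gram space, and let B be any basis of 𝒱 (as a subspace of the V×V matrices over ZMod 2). Then H has a k-qubit Pauli-based magic assignment for some k ≥ 1 if and only if B contains a magic Gram matrix. -/
open Matrix Finset

/-! ### Pauli matrices and observables -/

/-- The Pauli `X` matrix. -/
noncomputable def PX : Matrix (Fin 2) (Fin 2) ℂ := !![0, 1; 1, 0]

/-- The Pauli `Y` matrix. -/
noncomputable def PY : Matrix (Fin 2) (Fin 2) ℂ := !![0, -Complex.I; Complex.I, 0]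

/-- The Pauli `Z` matrix. -/
noncomputable def PZ : Matrix (Fin 2) (Fin 2) ℂ := !![1, 0; 0, -1]

/-- The Kronecker (tensor) product of `k` 2×2 matrices, realized as a matrix indexed by
`Fin k → Fin 2` (a type of cardinality `2^k`). -/
noncomputable def pauliTensor (k : ℕ) (P : Fin k → Matrix (Fin 2) (Fin 2) ℂ) :
    Matrix (Fin k → Fin 2) (Fin k → Fin 2) ℂ :=
  Matrix.of fun f g => ∏ i, P i (f i) (g i)

/-- A `k`-qubit Pauli observable: `ε · (P₁ ⊗ ⋯ ⊗ P_k)` with `ε ∈ {1,-1}` and each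
`P_i ∈ {I, X, Y, Z}`. -/
def IsPauliObservable {k : ℕ} (A : Matrix (Fin k → Fin 2) (Fin k → Fin 2) ℂ) : Prop :=
  ∃ (ε : ℂ) (P : Fin k → Matrix (Fin 2) (Fin 2) ℂ),
    (ε = 1 ∨ ε = -1) ∧ (∀ i, P i = 1 ∨ P i = PX ∨ P i = PY ∨ P i = PZ) ∧
    A = ε • pauliTensor k P

/-! ### Hypergraphs -/

/-- Product of the observables assigned to the vertices of a hyperedge (taken in increasing
order of the vertices; for commuting observables this is the product in any order). -/
noncomputable def edgeProd {V n : Type*} [LinearOrder V] [Fintype n] [DecidableEq n]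
    (α : V → Matrix n n ℂ) (e : Finset V) : Matrix n n ℂ :=
  ((e.sort (· ≤ ·)).map α).prod

/-- A proper Eulerian hypergraph: each vertex lies in an even number of hyperedges, there are
no isolated vertices, no empty hyperedges, and all hyperedges are distinct. -/
def ProperEulerian {V E : Type*} [DecidableEq V] [Fintype E] (edge : E → Finset V) : Prop :=
  (∀ v : V, Even (Finset.univ.filter (fun e : E => v ∈ edge e)).card) ∧
  (∀ v : V, ∃ e : E, v ∈ edge e) ∧
  (∀ e : E, (edge e).Nonempty) ∧
  Function.Injective edge

/-- A valid Gram matrix for a hypergraph. -/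
def IsValidGram {V E : Type*} (edge : E → Finset V) (M : Matrix V V (ZMod 2)) : Prop :=
  M.IsSymm ∧ (∀ v, M v v = 0) ∧
  (∀ e : E, ∀ u ∈ edge e, ∀ v ∈ edge e, M u v = 0) ∧
  (∀ e : E, ∀ v : V, ∑ u ∈ edge e, M u v = 0)

/-- The concatenated list of vertices of the hyperedges, each hyperedge's vertices listed in
increasing order, hyperedges enumerated by the list `le`. -/
def vertexList {V E : Type*} [LinearOrder V] (edge : E → Finset V) (le : List E) : List V :=
  (le.map fun e => (edge e).sort (· ≤ ·)).flatten

/-- The inversion sum `s(M) = ∑_{i<j, L_i > L_j} M_{L_i, L_j}`. -/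
def inversionSum {V : Type*} [LinearOrder V] (M : Matrix V V (ZMod 2)) (L : List V) : ZMod 2 :=
  ∑ i : Fin L.length, ∑ j : Fin L.length,
    if i < j ∧ L.get j < L.get i then M (L.get i) (L.get j) else 0

/-- A magic Gram matrix: a valid Gram matrix with inversion sum 1. -/
def MagicGram {V E : Type*} [LinearOrder V] (edge : E → Finset V) (le : List E)
    (M : Matrix V V (ZMod 2)) : Prop :=
  IsValidGram edge M ∧ inversionSum M (vertexList edge le) = 1

/-- A `k`-qubit Pauli-based magic assignment of a hypergraph. -/
def IsPauliMagicAssignment {V E : Type*} [LinearOrder V] [Fintype E] (k : ℕ)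
    (edge : E → Finset V) (α : V → Matrix (Fin k → Fin 2) (Fin k → Fin 2) ℂ) : Prop :=
  (∀ v, IsPauliObservable (α v)) ∧
  (∀ e : E, ∀ u ∈ edge e, ∀ w ∈ edge e, Commute (α u) (α w)) ∧
  (∀ e : E, edgeProd α (edge e) = 1 ∨ edgeProd α (edge e) = -1) ∧
  Odd (Nat.card {e : E // edgeProd α (edge e) = -1})

/-- A magic assignment of a hypergraph by Hermitian matrices squaring to the identity. -/
def IsMagicAssignment {V E n : Type*} [LinearOrder V] [Fintype E] [Fintype n] [DecidableEq n]
    (edge : E → Finset V) (α : V → Matrix n n ℂ) : Prop :=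
  (∀ v, (α v).IsHermitian) ∧ (∀ v, α v * α v = 1) ∧
  (∀ e : E, ∀ u ∈ edge e, ∀ w ∈ edge e, Commute (α u) (α w)) ∧
  (∀ e : E, edgeProd α (edge e) = 1 ∨ edgeProd α (edge e) = -1) ∧
  Odd (Nat.card {e : E // edgeProd α (edge e) = -1})

open scoped Classical in
/-- The sign vector `c(α) ∈ (ZMod 2)^E` of an assignment: `0` on hyperedges with product `+I`,
`1` on the others. -/
noncomputable def cvec {V E n : Type*} [LinearOrder V] [Fintype E] [Fintype n] [DecidableEq n]
    (edge : E → Finset V) (α : V → Matrix n n ℂ) : E → ZMod 2 :=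
  fun e => if edgeProd α (edge e) = 1 then 0 else 1

/-- The incidence matrix of a hypergraph. -/
def incMatrix {V E : Type*} [DecidableEq V] (edge : E → Finset V) : Matrix V E (ZMod 2) :=
  Matrix.of fun v e => if v ∈ edge e then 1 else 0

/-- Hamming weight of a vector over `ZMod 2`. -/
def hWeight {E : Type*} [Fintype E] (y : E → ZMod 2) : ℕ :=
  (Finset.univ.filter fun e => y e ≠ 0).card

/-- The symplectic product on `(ZMod 2)^{2k}` (coordinates indexed by `Fin k ⊕ Fin k`). -/
def sympl (k : ℕ) (s t : Fin k ⊕ Fin k → ZMod 2) : ZMod 2 :=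
  ∑ i : Fin k, (s (Sum.inl i) * t (Sum.inr i) + s (Sum.inr i) * t (Sum.inl i))

/-!
Write each Pauli observable as `±` a Pauli string indexed by a vector of `(ZMod 2 × ZMod 2)ᵏ`.
Two Pauli strings commute or anticommute according to the symplectic product of their vectors,
so the matrix `M` of symplectic products is a valid Gram matrix and the assignment satisfies
`α u * α v = (-1) ^ M u v • (α v * α u)`. The product of all hyperedge products, taken in the
order of `le`, is the word `α L₁ ⋯ α Lₜ` in which every vertex occurs an even number of times;
cancelling the occurrences in pairs collects the sign `(-1) ^ s(M)`, while evaluating hyperedge by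
hyperedge gives `-1` to the number of negative hyperedges. So the assignment is magic iff
`s(M) = 1`, and as `s` is linear and `B` spans the valid Gram space, some element of `B` is then
magic.

Conversely, an alternating form over `ZMod 2` is the pullback of the standard symplectic form along
a linear map vanishing on its radical (split off hyperbolic planes one at a time). Applied to a
magic Gram matrix this yields Pauli strings whose products over the hyperedges are `±1`.
-/

lemma ZMod.two_cases (a : ZMod 2) : a = 0 ∨ a = 1 := by revert a; decide

lemma neg_one_uzpow_eq_one_iff (a : ZMod 2) : (-1 : ℤˣ) ^ a = 1 ↔ a = 0 := by
  rcases a.two_cases with rfl | rfl <;> decide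

lemma neg_one_uzpow_injective : Function.Injective fun a : ZMod 2 => (-1 : ℤˣ) ^ a := by
  decide

lemma neg_one_uzpow_sum {ι : Type*} (s : Finset ι) (f : ι → ZMod 2) :
    (-1 : ℤˣ) ^ (∑ i ∈ s, f i) = ∏ i ∈ s, (-1 : ℤˣ) ^ f i := by
  classical
  induction s using Finset.induction_on with
  | empty => simp
  | insert i s hi ih => rw [sum_insert hi, prod_insert hi, uzpow_add, ih]

lemma neg_one_ne_one_of_neZero_two {A : Type*} [Ring A] [NeZero (2 : A)] : (-1 : A) ≠ 1 :=
  fun h => two_ne_zero (one_add_one_eq_two (R := A) ▸ neg_eq_iff_add_eq_zero.1 h)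

lemma Int.units_eq_one_of_smul_eq_self {A : Type*} [Ring A] [NeZero (2 : A)] {u : ℤˣ} {X : A}
    (hX : IsUnit X) (h : u • X = X) : u = 1 := by
  rcases Int.units_eq_one_or u with rfl | rfl
  · rfl
  · refine absurd ?_ (two_ne_zero (α := A))
    rw [Units.neg_smul, one_smul, neg_eq_iff_add_eq_zero, ← two_mul] at h
    exact hX.mul_left_eq_zero.1 h

lemma Int.units_smul_one_injective {A : Type*} [Ring A] [NeZero (2 : A)] :
    Function.Injective fun u : ℤˣ => u • (1 : A) := by
  intro u u' h
  have : (u'⁻¹ * u) • (1 : A) = 1 := by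
    simp only at h
    rw [mul_smul, h, ← mul_smul, inv_mul_cancel, one_smul]
  exact (_root_.inv_mul_eq_one.1 (Int.units_eq_one_of_smul_eq_self isUnit_one this)).symm

lemma list_prod_neg_one_uzpow_smul_one {ι A : Type*} [Ring A] (c : ι → ZMod 2) (l : List ι) :
    (l.map fun i => (-1 : ℤˣ) ^ c i • (1 : A)).prod = (-1 : ℤˣ) ^ (l.map c).sum • 1 := by
  induction l with
  | nil => simp
  | cons i l ih => rw [List.map_cons, List.prod_cons, ih, List.map_cons, List.sum_cons,
      uzpow_add, smul_mul_smul_comm, one_mul, mul_smul]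

instance Matrix.neZero_two {n R : Type*} [Fintype n] [DecidableEq n] [Nonempty n] [Semiring R]
    [NeZero (2 : R)] : NeZero (2 : Matrix n n R) :=
  ⟨fun h => two_ne_zero (α := R) <| by
    simpa [Matrix.ofNat_apply] using
      congrFun (congrFun h (Classical.arbitrary n)) (Classical.arbitrary n)⟩

lemma Int.units_smul_eq_cast_smul (R : Type*) {M : Type*} [Ring R] [AddCommGroup M] [Module R M]
    (u : ℤˣ) (x : M) : u • x = ((u : ℤ) : R) • x := by
  rw [Units.smul_def, Int.cast_smul_eq_zsmul]

lemma algebraMap_eq_one_or_eq_neg_one {K A : Type*} [Field K] [Ring A] [Nontrivial A]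
    [Algebra K A] {c : K} (h : algebraMap K A c * algebraMap K A c = 1) :
    algebraMap K A c = 1 ∨ algebraMap K A c = -1 := by
  rw [← map_mul, ← map_one (algebraMap K A)] at h
  rcases mul_self_eq_one_iff.1 ((algebraMap K A).injective h) with rfl | rfl <;> simp

lemma List.prod_mul_self_eq_one {M : Type*} [Monoid M] {l : List M}
    (hc : ∀ x ∈ l, ∀ y ∈ l, Commute x y) (hsq : ∀ x ∈ l, x * x = 1) :
    l.prod * l.prod = 1 := by
  induction l with
  | nil => simp
  | cons x l ih =>
    have hxl : Commute l.prod x :=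
      Commute.list_prod_left _ _ fun y hy => hc y (mem_cons_of_mem x hy) x mem_cons_self
    rw [List.prod_cons, hxl.mul_mul_mul_comm, hsq x mem_cons_self,
      ih (fun a ha b hb => hc a (mem_cons_of_mem x ha) b (mem_cons_of_mem x hb))
        (fun a ha => hsq a (mem_cons_of_mem x ha)), one_mul]

lemma Finset.sum_map_sort {α M : Type*} [LinearOrder α] [AddCommMonoid M] (s : Finset α)
    (f : α → M) :
    ((s.sort (· ≤ ·)).map f).sum = ∑ x ∈ s, f x := by
  rw [Finset.sum_eq_multiset_sum, ← Finset.sort_eq s (· ≤ ·), Multiset.map_coe,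
    Multiset.sum_coe]

section Inversions

variable {V : Type*} [LinearOrder V] (M : Matrix V V (ZMod 2))

lemma inversionSum_nil : inversionSum M [] = 0 := by
  simp [inversionSum]

lemma inversionSum_cons (x : V) (t : List V) :
    inversionSum M (x :: t) =
      (t.map fun y => if y < x then M x y else 0).sum + inversionSum M t := by
  simp only [inversionSum, List.length_cons, List.get_eq_getElem, Fin.sum_univ_succ, not_lt_zero,
    Fin.coe_ofNat_eq_mod, Nat.zero_mod, List.getElem_cons_zero, false_and, ↓reduceIte,
    Fin.val_succ, List.getElem_cons_succ, zero_add, Fin.succ_pos, true_and,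
    Fin.succ_lt_succ_iff, add_left_inj]
  exact Fin.sum_univ_fun_getElem t fun y => if y < x then M x y else 0

lemma inversionSum_cons_append_cons (hM : M.IsSymm) (hdiag : ∀ v, M v v = 0) (x : V)
    (t₁ t₂ : List V) :
    inversionSum M (x :: (t₁ ++ x :: t₂)) =
      (t₁.map (M · x)).sum + inversionSum M (t₁ ++ t₂) := by
  induction t₁ with
  | nil =>
    simp only [List.nil_append, inversionSum_cons, List.map_cons, List.sum_cons, lt_irrefl,
      if_false, List.map_nil, List.sum_nil, zero_add, ← add_assoc, CharTwo.add_self_eq_zero]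
  | cons y t₁ ih =>
    have hpair : (if y < x then M x y else 0) + (if x < y then M y x else 0) = M y x := by
      rcases lt_trichotomy x y with h | rfl | h
      · simp [h, h.not_gt]
      · simp [hdiag]
      · simp [h, h.not_gt, hM.apply]
    simp only [List.cons_append, inversionSum_cons, List.map_append, List.map_cons,
      List.sum_append, List.sum_cons] at ih ⊢
    linear_combination ih + hpair

end Inversions

def inversionSumLinearMap {V : Type*} [LinearOrder V] (L : List V) :
    Matrix V V (ZMod 2) →ₗ[ZMod 2] ZMod 2 where
  toFun M := inversionSum M L
  map_add' A B := by simp [inversionSum, ← Finset.sum_add_distrib, ite_add_ite]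
  map_smul' c A := by simp [inversionSum, Finset.mul_sum]

lemma exists_mem_inversionSum_eq_one {V : Type*} [LinearOrder V] {L : List V}
    {B : Set (Matrix V V (ZMod 2))} {M : Matrix V V (ZMod 2)} (hM : M ∈ Submodule.span (ZMod 2) B)
    (h : inversionSum M L = 1) : ∃ b ∈ B, inversionSum b L = 1 := by
  by_contra! hB
  have hker : B ⊆ LinearMap.ker (inversionSumLinearMap L) := fun b hb =>
    (inversionSum b L).two_cases.resolve_right (hB b hb)
  exact one_ne_zero (h.symm.trans (Submodule.span_le.2 hker hM))

section TwistedCommutation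

variable {V A : Type*} [Ring A]

def TwistedComm (M : Matrix V V (ZMod 2)) (β : V → A) : Prop :=
  ∀ u v, β u * β v = (-1 : ℤˣ) ^ M u v • (β v * β u)

variable {M : Matrix V V (ZMod 2)} {β : V → A}

lemma TwistedComm.smul {R : Type*} [CommRing R] [Algebra R A] (h : TwistedComm M β)
    (c : V → R) : TwistedComm M fun v => c v • β v := by
  intro u w
  rw [smul_mul_smul_comm, h u w, smul_comm, smul_mul_smul_comm, mul_comm (c u)]

lemma TwistedComm.commute (h : TwistedComm M β) {u w : V} (huw : M u w = 0) :
    Commute (β u) (β w) := by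
  rw [Commute, SemiconjBy, h u w, huw, uzpow_zero, one_smul]

lemma TwistedComm.list_prod_mul (h : TwistedComm M β) (x : V) (t : List V) :
    (t.map β).prod * β x = (-1 : ℤˣ) ^ (t.map (M · x)).sum • (β x * (t.map β).prod) := by
  induction t with
  | nil => simp
  | cons y t ih =>
    rw [List.map_cons, List.prod_cons, List.map_cons, List.sum_cons, uzpow_add, mul_comm,
      mul_smul, mul_assoc, ih, mul_smul_comm, ← mul_assoc, h y x, smul_mul_assoc, mul_assoc]

lemma TwistedComm.eq_zero_of_commute [NeZero (2 : A)] (h : TwistedComm M β)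
    (hsq : ∀ v, β v * β v = 1) {u v : V} (huv : Commute (β u) (β v)) : M u v = 0 := by
  have hunit (w : V) : IsUnit (β w) := ⟨⟨β w, β w, hsq w, hsq w⟩, rfl⟩
  rw [← neg_one_uzpow_eq_one_iff]
  exact Int.units_eq_one_of_smul_eq_self ((hunit v).mul (hunit u)) ((h u v).symm.trans huv.eq)

lemma TwistedComm.list_sum_eq_zero_of_commute [NeZero (2 : A)] (h : TwistedComm M β)
    (hsq : ∀ v, β v * β v = 1) (l : List V) (w : V) (hl : IsUnit (l.map β).prod)
    (hc : Commute (l.map β).prod (β w)) :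
    (l.map (M · w)).sum = 0 := by
  have hw : IsUnit (β w) := ⟨⟨β w, β w, hsq w, hsq w⟩, rfl⟩
  rw [← neg_one_uzpow_eq_one_iff]
  exact Int.units_eq_one_of_smul_eq_self (hw.mul hl) ((h.list_prod_mul w l).symm.trans hc.eq)

lemma TwistedComm.list_prod_eq_of_even_count [LinearOrder V] (h : TwistedComm M β)
    (hsq : ∀ v, β v * β v = 1) (hM : M.IsSymm) (hdiag : ∀ v, M v v = 0) (L : List V)
    (hL : ∀ v, Even (L.count v)) :
    (L.map β).prod = (-1 : ℤˣ) ^ inversionSum M L • 1 := by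
  induction hlen : L.length using Nat.strong_induction_on generalizing L with
  | _ n ih =>
  rcases L with _ | ⟨x, t⟩
  · simp [inversionSum_nil]
  have hx : x ∈ t := by
    have := hL x
    rw [List.count_cons_self, Nat.even_add_one, Nat.not_even_iff_odd] at this
    exact List.count_pos_iff.1 this.pos
  obtain ⟨t₁, t₂, rfl⟩ := List.append_of_mem hx
  have hL' : ∀ v, Even ((t₁ ++ t₂).count v) := by
    intro v
    have := hL v
    simp only [List.count_cons, List.count_append, beq_iff_eq] at this ⊢
    split_ifs at this <;> grind
  calc ((x :: (t₁ ++ x :: t₂)).map β).prod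
      = (-1 : ℤˣ) ^ (t₁.map (M · x)).sum • ((t₁ ++ t₂).map β).prod := by
        simp only [List.map_cons, List.map_append, List.prod_cons, List.prod_append,
          ← mul_assoc, h.list_prod_mul, smul_mul_assoc, mul_smul_comm, hsq, one_mul]
    _ = (-1 : ℤˣ) ^ inversionSum M (x :: (t₁ ++ x :: t₂)) • 1 := by
        rw [ih _ (by simp [← hlen]) _ hL' rfl, smul_smul, ← uzpow_add,
          inversionSum_cons_append_cons M hM hdiag]

end TwistedCommutation

section Hypergraph

variable {V E : Type*} [LinearOrder V] {edge : E → Finset V} {le : List E}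

lemma count_vertexList [Fintype E] (hnd : le.Nodup) (hmem : ∀ e, e ∈ le) (v : V) :
    (vertexList edge le).count v = #{e | v ∈ edge e} := by
  classical
  simp only [vertexList, List.count_flatten, List.map_map, Function.comp_def,
    (Finset.sort_nodup _ _).count, Finset.mem_sort, ← List.sum_toFinset _ hnd,
    eq_univ_of_forall fun e => List.mem_toFinset.2 (hmem e),
    Finset.sum_boole, Nat.cast_id]

lemma prod_edgeProd_eq_prod_vertexList {n : Type*} [Fintype n] [DecidableEq n]
    (α : V → Matrix n n ℂ) :
    (le.map fun e => edgeProd α (edge e)).prod = ((vertexList edge le).map α).prod := by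
  simp only [vertexList, List.map_flatten, List.prod_flatten, List.map_map]
  rfl

variable {n : Type*} [Fintype n] [DecidableEq n] {α : V → Matrix n n ℂ}

lemma edgeProd_eq_cvec [Fintype E]
    (hpm : ∀ e, edgeProd α (edge e) = 1 ∨ edgeProd α (edge e) = -1) (e : E) :
    edgeProd α (edge e) = (-1 : ℤˣ) ^ cvec edge α e • 1 := by
  rcases hpm e with h | h <;> simp [cvec, h]

variable [Fintype E]

lemma sum_cvec [Nonempty n] (hpm : ∀ e, edgeProd α (edge e) = 1 ∨ edgeProd α (edge e) = -1) :
    ∑ e, cvec edge α e = (Nat.card {e // edgeProd α (edge e) = -1} : ZMod 2) := by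
  have hcvec (e : E) : cvec edge α e = if edgeProd α (edge e) = -1 then 1 else 0 := by
    rcases hpm e with h | h <;>
      simp [cvec, h, neg_one_ne_one_of_neZero_two, neg_one_ne_one_of_neZero_two.symm]
  simp [hcvec, Finset.sum_boole, Nat.card_eq_fintype_card, Fintype.card_subtype]

theorem odd_card_edgeProd_eq_neg_one_iff [Nonempty n] (hdeg : ∀ v, Even #{e | v ∈ edge e})
    (hnd : le.Nodup) (hmem : ∀ e, e ∈ le) {M : Matrix V V (ZMod 2)} (h : TwistedComm M α)
    (hsq : ∀ v, α v * α v = 1) (hM : M.IsSymm) (hdiag : ∀ v, M v v = 0)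
    (hpm : ∀ e, edgeProd α (edge e) = 1 ∨ edgeProd α (edge e) = -1) :
    Odd (Nat.card {e // edgeProd α (edge e) = -1}) ↔
      inversionSum M (vertexList edge le) = 1 := by
  classical
  have key : (-1 : ℤˣ) ^ (∑ e, cvec edge α e) • (1 : Matrix n n ℂ) =
      (-1 : ℤˣ) ^ inversionSum M (vertexList edge le) • 1 := by
    calc _ = (le.map fun e => edgeProd α (edge e)).prod := by
          rw [List.map_congr_left fun e _ => edgeProd_eq_cvec hpm e,
            list_prod_neg_one_uzpow_smul_one, ← List.sum_toFinset _ hnd,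
            eq_univ_of_forall fun e => List.mem_toFinset.2 (hmem e)]
      _ = _ := by
          rw [prod_edgeProd_eq_prod_vertexList, h.list_prod_eq_of_even_count hsq hM hdiag]
          simpa [count_vertexList hnd hmem] using hdeg
  rw [← ZMod.natCast_eq_one_iff_odd, ← sum_cvec hpm,
    neg_one_uzpow_injective (Int.units_smul_one_injective key)]

end Hypergraph

section Pauli

-- `(a, b)` stands for `X ^ a * Z ^ b` up to a phase, so that `(1, 1)` is `Y`.
noncomputable def pauli (s : ZMod 2 × ZMod 2) : Matrix (Fin 2) (Fin 2) ℂ :=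
  ![![1, PZ], ![PX, PY]] s.1 s.2

lemma pauli_zero_zero : pauli (0, 0) = 1 := rfl
lemma pauli_one_zero : pauli (1, 0) = PX := rfl
lemma pauli_zero_one : pauli (0, 1) = PZ := rfl
lemma pauli_one_one : pauli (1, 1) = PY := rfl

lemma pauli_eq_or (s : ZMod 2 × ZMod 2) :
    pauli s = 1 ∨ pauli s = PX ∨ pauli s = PY ∨ pauli s = PZ := by
  obtain ⟨a, b⟩ := s
  rcases a.two_cases with rfl | rfl <;> rcases b.two_cases with rfl | rfl <;>
    simp [pauli_zero_zero, pauli_one_zero, pauli_zero_one, pauli_one_one]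

lemma exists_pauli_eq {P : Matrix (Fin 2) (Fin 2) ℂ}
    (hP : P = 1 ∨ P = PX ∨ P = PY ∨ P = PZ) :
    ∃ s, pauli s = P := by
  rcases hP with rfl | rfl | rfl | rfl
  exacts [⟨(0, 0), rfl⟩, ⟨(1, 0), rfl⟩, ⟨(1, 1), rfl⟩, ⟨(0, 1), rfl⟩]

lemma pauli_mul_self (s : ZMod 2 × ZMod 2) : pauli s * pauli s = 1 := by
  obtain ⟨a, b⟩ := s
  rcases a.two_cases with rfl | rfl <;> rcases b.two_cases with rfl | rfl <;>
    simp [pauli_zero_zero, pauli_one_zero, pauli_zero_one, pauli_one_one, PX, PY, PZ,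
      Matrix.one_fin_two]

lemma smul_of_fin_two (c a b d e : ℂ) :
    c • !![a, b; d, e] = !![c * a, c * b; c * d, c * e] := by
  ext i j; fin_cases i <;> fin_cases j <;> rfl

lemma pauli_mul_comm (s t : ZMod 2 × ZMod 2) :
    pauli s * pauli t = (-1 : ℤˣ) ^ (s.1 * t.2 + s.2 * t.1) • (pauli t * pauli s) := by
  obtain ⟨a, b⟩ := s
  obtain ⟨c, d⟩ := t
  rcases a.two_cases with rfl | rfl <;> rcases b.two_cases with rfl | rfl <;>
    rcases c.two_cases with rfl | rfl <;> rcases d.two_cases with rfl | rfl <;>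
    simp only [pauli_zero_zero, pauli_one_zero, pauli_zero_one, pauli_one_one, PX, PY, PZ,
      Matrix.one_fin_two, Matrix.mul_fin_two, mul_zero, zero_mul, mul_one, one_mul, add_zero,
      zero_add, CharTwo.add_self_eq_zero, uzpow_zero, uzpow_one, one_smul, Units.neg_smul,
      Matrix.neg_of]
  all_goals ext i j; fin_cases i <;> fin_cases j <;> simp

lemma pauli_mul (s t : ZMod 2 × ZMod 2) :
    ∃ c : ℂ, pauli s * pauli t = c • pauli (s + t) := by
  -- `pauli (s + t)` squares to `1`, so the scalar can be read off a diagonal entry.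
  refine ⟨(pauli s * pauli t * pauli (s + t)) 0 0, ?_⟩
  obtain ⟨a, b⟩ := s
  obtain ⟨c, d⟩ := t
  rcases a.two_cases with rfl | rfl <;> rcases b.two_cases with rfl | rfl <;>
    rcases c.two_cases with rfl | rfl <;> rcases d.two_cases with rfl | rfl <;>
    simp only [Prod.mk_add_mk, add_zero, zero_add, CharTwo.add_self_eq_zero, pauli_zero_zero,
      pauli_one_zero, pauli_zero_one, pauli_one_one, PX, PY, PZ, Matrix.one_fin_two,
      Matrix.mul_fin_two, smul_of_fin_two] <;>
    ext i j <;> fin_cases i <;> fin_cases j <;> simp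

variable {k : ℕ}

lemma pauliTensor_mul (P Q : Fin k → Matrix (Fin 2) (Fin 2) ℂ) :
    pauliTensor k P * pauliTensor k Q = pauliTensor k (P * Q) := by
  ext f g
  simp only [pauliTensor, Matrix.mul_apply, Matrix.of_apply, Pi.mul_apply, ← prod_mul_distrib,
    Finset.prod_univ_sum, Fintype.piFinset_univ]

lemma pauliTensor_one : pauliTensor k 1 = 1 := by
  ext f g
  by_cases h : f = g
  · subst h
    simp [pauliTensor]
  · obtain ⟨i, hi⟩ := Function.ne_iff.1 h
    simp [pauliTensor, Matrix.one_apply_ne h, Finset.prod_eq_zero (mem_univ i),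
      Matrix.one_apply_ne hi]

lemma pauliTensor_smul (c : Fin k → ℂ) (P : Fin k → Matrix (Fin 2) (Fin 2) ℂ) :
    pauliTensor k (c • P) = (∏ i, c i) • pauliTensor k P := by
  ext f g
  simp [pauliTensor, Finset.prod_mul_distrib]

noncomputable def pauliString (s : Fin k → ZMod 2 × ZMod 2) :
    Matrix (Fin k → Fin 2) (Fin k → Fin 2) ℂ :=
  pauliTensor k fun i => pauli (s i)

def symp (s t : Fin k → ZMod 2 × ZMod 2) : ZMod 2 :=
  ∑ i, ((s i).1 * (t i).2 + (s i).2 * (t i).1)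

lemma pauliString_zero : pauliString (0 : Fin k → ZMod 2 × ZMod 2) = 1 :=
  pauliTensor_one

lemma pauliString_mul_self (s : Fin k → ZMod 2 × ZMod 2) :
    pauliString s * pauliString s = 1 := by
  rw [pauliString, pauliTensor_mul, ← pauliTensor_one]
  exact congrArg _ (funext fun i => pauli_mul_self (s i))

lemma pauliString_mul_comm (s t : Fin k → ZMod 2 × ZMod 2) :
    pauliString s * pauliString t =
      (-1 : ℤˣ) ^ symp s t • (pauliString t * pauliString s) := by
  have h : (fun i => pauli (s i)) * (fun i => pauli (t i)) =
      (fun i => (((-1 : ℤˣ) ^ ((s i).1 * (t i).2 + (s i).2 * (t i).1) : ℤˣ) : ℂ)) •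
        ((fun i => pauli (t i)) * fun i => pauli (s i)) := by
    ext1 i
    rw [Pi.mul_apply, Pi.smul_apply', pauli_mul_comm, Int.units_smul_eq_cast_smul ℂ]
    rfl
  rw [pauliString, pauliString, pauliTensor_mul, pauliTensor_mul, h, pauliTensor_smul, symp,
    neg_one_uzpow_sum, Int.units_smul_eq_cast_smul ℂ]
  push_cast
  rfl

lemma pauliString_mul (s t : Fin k → ZMod 2 × ZMod 2) :
    ∃ c : ℂ, pauliString s * pauliString t = c • pauliString (s + t) := by
  choose c hc using fun i => pauli_mul (s i) (t i)
  refine ⟨∏ i, c i, ?_⟩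
  rw [pauliString, pauliString, pauliTensor_mul, pauliString, ← pauliTensor_smul]
  exact congrArg _ (funext hc)

lemma symp_comm (s t : Fin k → ZMod 2 × ZMod 2) : symp s t = symp t s := by
  simp only [symp]
  congr 1
  ext i
  ring

lemma symp_self (s : Fin k → ZMod 2 × ZMod 2) : symp s s = 0 := by
  simp [symp, mul_comm (s _).2, CharTwo.add_self_eq_zero]

lemma symp_cons (a b : ZMod 2 × ZMod 2) (s t : Fin k → ZMod 2 × ZMod 2) :
    symp (Fin.cons a s : Fin (k + 1) → _) (Fin.cons b t) = a.1 * b.2 + a.2 * b.1 + symp s t := by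
  simp [symp, Fin.sum_univ_succ]

lemma IsPauliObservable.exists_eq_smul_pauliString
    {A : Matrix (Fin k → Fin 2) (Fin k → Fin 2) ℂ} (hA : IsPauliObservable A) :
    ∃ ε : ℂ, (ε = 1 ∨ ε = -1) ∧ ∃ s, A = ε • pauliString s := by
  obtain ⟨ε, P, hε, hP, rfl⟩ := hA
  choose s hs using fun i => exists_pauli_eq (hP i)
  exact ⟨ε, hε, s, by simp only [pauliString, hs]⟩

lemma isPauliObservable_pauliString (s : Fin k → ZMod 2 × ZMod 2) :
    IsPauliObservable (pauliString s) :=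
  ⟨1, _, Or.inl rfl, fun i => pauli_eq_or (s i), (one_smul _ _).symm⟩

lemma twistedComm_pauliString {V : Type*} (p : V → Fin k → ZMod 2 × ZMod 2) :
    TwistedComm (Matrix.of fun u w => symp (p u) (p w)) fun v => pauliString (p v) :=
  fun u w => pauliString_mul_comm (p u) (p w)

lemma list_prod_pauliString (l : List (Fin k → ZMod 2 × ZMod 2)) :
    ∃ c : ℂ, (l.map pauliString).prod = c • pauliString l.sum := by
  induction l with
  | nil => exact ⟨1, by simp [pauliString_zero]⟩
  | cons s l ih =>
    obtain ⟨c, hc⟩ := ih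
    obtain ⟨d, hd⟩ := pauliString_mul s l.sum
    exact ⟨c * d, by rw [List.map_cons, List.prod_cons, List.sum_cons, hc, mul_smul_comm, hd,
      smul_smul]⟩

lemma edgeProd_pauliString_eq_one_or_eq_neg_one {V : Type*} [LinearOrder V]
    (p : V → Fin k → ZMod 2 × ZMod 2) {s : Finset V} (hs : ∑ v ∈ s, p v = 0)
    (hc : ∀ u ∈ s, ∀ w ∈ s, Commute (pauliString (p u)) (pauliString (p w))) :
    edgeProd (fun v => pauliString (p v)) s = 1 ∨
      edgeProd (fun v => pauliString (p v)) s = -1 := by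
  obtain ⟨c, hc'⟩ := list_prod_pauliString ((s.sort (· ≤ ·)).map p)
  have hscalar : edgeProd (fun v => pauliString (p v)) s = algebraMap ℂ _ c := by
    rw [edgeProd, show (fun v => pauliString (p v)) = pauliString ∘ p from rfl, ← List.map_map,
      hc', Finset.sum_map_sort, hs, pauliString_zero, Algebra.algebraMap_eq_smul_one]
  rw [hscalar]
  refine algebraMap_eq_one_or_eq_neg_one (hscalar ▸ List.prod_mul_self_eq_one ?_ ?_) <;>
    simp only [List.forall_mem_map, Finset.mem_sort]
  exacts [hc, fun v _ => pauliString_mul_self (p v)]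

end Pauli

section Realization

variable {Q : Type*} [AddCommGroup Q] [Module (ZMod 2) Q]

lemma LinearMap.IsAlt.apply_comm {β : LinearMap.BilinForm (ZMod 2) Q} (hβ : LinearMap.IsAlt β)
    (x y : Q) : β x y = β y x := by
  rw [← hβ.neg, ZMod.neg_eq_self_mod_two]

theorem LinearMap.IsAlt.exists_symp_realization [FiniteDimensional (ZMod 2) Q]
    {β : LinearMap.BilinForm (ZMod 2) Q} (hβ : LinearMap.IsAlt β) :
    ∃ k, 1 ≤ k ∧ ∃ φ : Q →ₗ[ZMod 2] Fin k → ZMod 2 × ZMod 2,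
      (∀ x y, symp (φ x) (φ y) = β x y) ∧ ∀ x ∈ LinearMap.ker β, φ x = 0 := by
  induction hd : Module.finrank (ZMod 2) Q - Module.finrank (ZMod 2) (LinearMap.ker β)
    using Nat.strong_induction_on generalizing β with
  | _ d ih =>
  by_cases hzero : β = 0
  · exact ⟨1, le_rfl, 0, by simp [hzero, symp], by simp⟩
  obtain ⟨u, v, huv⟩ : ∃ u v, β u v = 1 := by
    by_contra! h
    exact hzero (LinearMap.ext₂ fun x y => ((β x y).two_cases.resolve_right (h x y)))
  -- Split off the hyperbolic plane spanned by `u, v`: `ρ` projects onto its `β`-orthogonal.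
  set ρ : Q →ₗ[ZMod 2] Q := LinearMap.id + (β v).smulRight u + (β u).smulRight v
  have hρ (x : Q) : ρ x = x + β v x • u + β u x • v := rfl
  set β' := β.compl₁₂ ρ ρ
  have hsplit (x y : Q) : β x y = β' x y + (β v x * β u y + β u x * β v y) := by
    simp only [β', LinearMap.compl₁₂_apply, hρ, map_add, map_smul, LinearMap.add_apply,
      LinearMap.smul_apply, smul_eq_mul, hβ.self_eq_zero, huv, hβ.apply_comm v u]
    rw [hβ.apply_comm x u, hβ.apply_comm x v]
    ring_nf
    reduce_mod_char
  have hvu : β v u = 1 := by rw [hβ.apply_comm, huv]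
  have hker_apply {x : Q} (hx : x ∈ LinearMap.ker β) (y : Q) : β y x = 0 := by
    rw [hβ.apply_comm, LinearMap.mem_ker.1 hx, LinearMap.zero_apply]
  have hker : LinearMap.ker β < LinearMap.ker β' := by
    refine lt_of_le_of_ne (fun x hx => ?_) fun h => ?_
    · have hρx : ρ x = x := by simp [hρ, hker_apply hx]
      ext y
      simp [β', hρx, LinearMap.mem_ker.1 hx]
    · have hρu : ρ u = 0 := by
        rw [hρ, hβ.self_eq_zero, hvu, one_smul, zero_smul, add_zero, ← two_smul (ZMod 2) u]
        exact (show (2 : ZMod 2) = 0 from rfl) ▸ zero_smul _ u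
      have hu : u ∈ LinearMap.ker β' := LinearMap.ext fun y => by simp [β', hρu]
      rw [← h] at hu
      simp [LinearMap.mem_ker.1 hu] at huv
  have hlt : Module.finrank (ZMod 2) Q - Module.finrank (ZMod 2) (LinearMap.ker β') < d := by
    have := Submodule.finrank_lt_finrank_of_lt hker
    have := Submodule.finrank_le (LinearMap.ker β')
    omega
  obtain ⟨k, -, φ', hφ'symp, hφ'ker⟩ := ih _ hlt (β := β') (fun x => hβ (ρ x)) rfl
  set φ : Q →ₗ[ZMod 2] Fin (k + 1) → ZMod 2 × ZMod 2 :=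
    LinearMap.pi (Fin.cons ((β v).prod (β u)) fun i => (LinearMap.proj i).comp φ')
  have hφ (x : Q) : φ x = Fin.cons (β v x, β u x) (φ' x) := by
    ext1 i
    cases i using Fin.cases <;> rfl
  refine ⟨k + 1, by omega, φ, fun x y => ?_, fun x hx => ?_⟩
  · rw [hφ, hφ, symp_cons, hφ'symp, hsplit x y]
    ring
  · rw [hφ, hker_apply hx, hker_apply hx, hφ'ker x (hker.le hx)]
    exact Matrix.cons_zero_zero

lemma Matrix.isAlt_toBilin' {V : Type*} [Fintype V] [LinearOrder V] {b : Matrix V V (ZMod 2)}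
    (hb : b.IsSymm) (hdiag : ∀ v, b v v = 0) : LinearMap.IsAlt (Matrix.toBilin' b) := by
  set U : Matrix V V (ZMod 2) := Matrix.of fun u w => if u < w then b u w else 0
  have hU : b = U + Uᵀ := by
    ext u w
    rcases lt_trichotomy u w with h | rfl | h
    · simp [U, h, h.not_gt]
    · simp [U, hdiag]
    · simp [U, h, h.not_gt, hb.apply]
  intro x
  rw [Matrix.toBilin'_apply', hU, Matrix.add_mulVec, dotProduct_add,
    Matrix.dotProduct_mulVec x Uᵀ, Matrix.vecMul_transpose, dotProduct_comm,
    CharTwo.add_self_eq_zero]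

lemma Matrix.sum_single_mem_ker_toBilin' {V R : Type*} [Fintype V] [DecidableEq V] [CommRing R]
    {b : Matrix V V R} {s : Finset V} (hs : ∀ w, ∑ u ∈ s, b u w = 0) :
    ∑ v ∈ s, Pi.single v (1 : R) ∈ LinearMap.ker (Matrix.toBilin' b) :=
  LinearMap.pi_ext fun w c => by
    simp [Matrix.toBilin'_apply', Matrix.mulVec_single, ← Finset.mul_sum, hs]

end Realization

section Main

variable {V E : Type*} [LinearOrder V] [Fintype E] {edge : E → Finset V} {le : List E}

theorem IsPauliMagicAssignment.exists_magicGram (hdeg : ∀ v, Even #{e | v ∈ edge e})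
    (hnd : le.Nodup) (hmem : ∀ e, e ∈ le) {k : ℕ}
    {α : V → Matrix (Fin k → Fin 2) (Fin k → Fin 2) ℂ}
    (hα : IsPauliMagicAssignment k edge α) :
    ∃ M, MagicGram edge le M := by
  obtain ⟨hobs, hcomm, hpm, hodd⟩ := hα
  choose ε hε p hp using fun v => (hobs v).exists_eq_smul_pauliString
  set M : Matrix V V (ZMod 2) := Matrix.of fun u w => symp (p u) (p w)
  have hM : M.IsSymm := Matrix.IsSymm.ext fun u w => symp_comm _ _
  have hdiag (v : V) : M v v = 0 := symp_self _
  have htw : TwistedComm M α := by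
    rw [funext hp]
    exact (twistedComm_pauliString p).smul ε
  have hsq (v : V) : α v * α v = 1 := by
    rw [hp, smul_mul_smul_comm, pauliString_mul_self]
    rcases hε v with h | h <;> simp [h]
  have hsum (e : E) (w : V) : ∑ u ∈ edge e, M u w = 0 := by
    rw [← Finset.sum_map_sort]
    apply htw.list_sum_eq_zero_of_commute hsq <;>
      rcases hpm e with h | h <;> rw [← edgeProd, h] <;> simp
  refine ⟨M, ⟨hM, hdiag, fun e u hu w hw => htw.eq_zero_of_commute hsq (hcomm e u hu w hw),
    hsum⟩, ?_⟩
  have : Nonempty (Fin k → Fin 2) := ⟨0⟩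
  exact (odd_card_edgeProd_eq_neg_one_iff hdeg hnd hmem htw hsq hM hdiag hpm).1 hodd

theorem MagicGram.exists_isPauliMagicAssignment [Fintype V] (hdeg : ∀ v, Even #{e | v ∈ edge e})
    (hnd : le.Nodup) (hmem : ∀ e, e ∈ le) {b : Matrix V V (ZMod 2)} (hb : MagicGram edge le b) :
    ∃ k, 1 ≤ k ∧ ∃ α : V → Matrix (Fin k → Fin 2) (Fin k → Fin 2) ℂ,
      IsPauliMagicAssignment k edge α := by
  obtain ⟨⟨hsymm, hdiag, hedge, hsum⟩, hinv⟩ := hb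
  obtain ⟨k, hk, φ, hφ, hker⟩ := (Matrix.isAlt_toBilin' hsymm hdiag).exists_symp_realization
  set p : V → Fin k → ZMod 2 × ZMod 2 := fun v => φ (Pi.single v 1)
  have hp : Matrix.of (fun u w => symp (p u) (p w)) = b := by
    ext u w
    simp [p, hφ]
  set α : V → Matrix (Fin k → Fin 2) (Fin k → Fin 2) ℂ := fun v => pauliString (p v)
  have htw : TwistedComm b α := hp ▸ twistedComm_pauliString p
  have hsq (v : V) : α v * α v = 1 := pauliString_mul_self _
  have hcomm (e : E) : ∀ u ∈ edge e, ∀ w ∈ edge e, Commute (α u) (α w) :=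
    fun u hu w hw => htw.commute (hedge e u hu w hw)
  have hpm (e : E) : edgeProd α (edge e) = 1 ∨ edgeProd α (edge e) = -1 :=
    edgeProd_pauliString_eq_one_or_eq_neg_one p
      (by rw [← map_sum]; exact hker _ (Matrix.sum_single_mem_ker_toBilin' (hsum e))) (hcomm e)
  have : Nonempty (Fin k → Fin 2) := ⟨0⟩
  exact ⟨k, hk, α, fun v => isPauliObservable_pauliString _, hcomm, hpm,
    (odd_card_edgeProd_eq_neg_one_iff hdeg hnd hmem htw hsq hsymm hdiag hpm).2 hinv⟩

end Main

theorem stmt0_general {V E : Type*} [Fintype V] [LinearOrder V] [Fintype E]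
    (edge : E → Finset V) (hH : ProperEulerian edge)
    (le : List E) (hnd : le.Nodup) (hmem : ∀ e : E, e ∈ le)
    (B : Set (Matrix V V (ZMod 2)))
    (hBvalid : ∀ M ∈ B, IsValidGram edge M)
    (hBspan : ∀ M : Matrix V V (ZMod 2), IsValidGram edge M →
      M ∈ Submodule.span (ZMod 2) B) :
    (∃ k : ℕ, 1 ≤ k ∧ ∃ α : V → Matrix (Fin k → Fin 2) (Fin k → Fin 2) ℂ,
        IsPauliMagicAssignment k edge α) ↔
      ∃ M ∈ B, MagicGram edge le M := by
  constructor
  · rintro ⟨k, -, α, hα⟩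
    obtain ⟨M, hMvalid, hMinv⟩ := hα.exists_magicGram hH.1 hnd hmem
    obtain ⟨b, hb, hbinv⟩ := exists_mem_inversionSum_eq_one (hBspan M hMvalid) hMinv
    exact ⟨b, hb, hBvalid b hb, hbinv⟩
  · rintro ⟨b, -, hb⟩
    exact hb.exists_isPauliMagicAssignment hH.1 hnd hmem

/-- For a proper Eulerian hypergraph `H` and any basis `B` of its valid Gram
space, `H` has a `k`-qubit Pauli-based magic assignment for some `k ≥ 1` iff `B` contains a
magic Gram matrix. -/
theorem stmt0 {V E : Type*} [Fintype V] [LinearOrder V] [Fintype E]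
    (edge : E → Finset V) (hH : ProperEulerian edge)
    (le : List E) (hnd : le.Nodup) (hmem : ∀ e : E, e ∈ le)
    (B : Set (Matrix V V (ZMod 2)))
    (hBvalid : ∀ M ∈ B, IsValidGram edge M)
    (hBindep : LinearIndependent (ZMod 2) ((↑) : B → Matrix V V (ZMod 2)))
    (hBspan : ∀ M : Matrix V V (ZMod 2), IsValidGram edge M →
      M ∈ Submodule.span (ZMod 2) B) :
    (∃ k : ℕ, 1 ≤ k ∧ ∃ α : V → Matrix (Fin k → Fin 2) (Fin k → Fin 2) ℂ,
        IsPauliMagicAssignment k edge α) ↔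
      ∃ M ∈ B, MagicGram edge le M :=
  stmt0_general edge hH le hnd hmem B hBvalid hBspan
end

section
/- Let H = (V,E) be a proper Eulerian hypergraph with incidence matrix M, let ᾱ be a magic assignment of H, and let w_min be the minimum Hamming weight of an element of the affine space c(ᾱ) + row(M) ⊆ (ZMod 2)^E. Then the noncontextual bound of ᾱ satisfies b_{ᾱ}(H) = |E| − 2·w_min. -/
open Matrix Finset

private lemma chi_add (u v : ZMod 2) : (-1:ℤ)^(u+v).val = (-1:ℤ)^u.val * (-1:ℤ)^v.val := by
  revert u v; decide

private lemma chi_sum {ι : Type*} (s : Finset ι) (f : ι → ZMod 2) :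
    (-1:ℤ)^(∑ v ∈ s, f v).val = ∏ v ∈ s, (-1:ℤ)^(f v).val := by
  induction s using Finset.cons_induction with
  | empty => simp
  | cons a s ha ih => rw [Finset.sum_cons, Finset.prod_cons, chi_add, ih]

private lemma key {V E : Type*} [Fintype V] [DecidableEq V] [Fintype E]
    (edge : E → Finset V) (c : E → ZMod 2) (x : V → ZMod 2) :
    ∑ e : E, (-1:ℤ)^(c e).val * ∏ v ∈ edge e, (-1:ℤ)^(x v).val
      = (Fintype.card E : ℤ) - 2 * hWeight (c + Matrix.vecMul x (incMatrix edge)) := by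
  classical
  have h1 : ∀ e : E, Matrix.vecMul x (incMatrix edge) e = ∑ v ∈ edge e, x v := by
    intro e
    simp [Matrix.vecMul, dotProduct, incMatrix, mul_ite, mul_one, mul_zero,
      Finset.sum_ite_mem, Finset.univ_inter]
  have h2 : ∀ u : ZMod 2, (-1:ℤ)^u.val = 1 - 2 * (if u ≠ 0 then 1 else 0) := by decide
  have h3 : ∀ e : E, (-1:ℤ)^(c e).val * ∏ v ∈ edge e, (-1:ℤ)^(x v).val
      = 1 - 2 * (if (c + Matrix.vecMul x (incMatrix edge)) e ≠ 0 then 1 else 0) := by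
    intro e
    rw [← chi_sum, ← chi_add, ← h2]
    congr 1
    simp [h1 e]
  rw [Finset.sum_congr rfl (fun e _ => h3 e), Finset.sum_sub_distrib, Finset.sum_const,
    ← Finset.mul_sum, Finset.sum_boole, hWeight]
  simp [Finset.card_univ]

private lemma chi_pm (u : ZMod 2) : (-1:ℤ)^u.val = 1 ∨ (-1:ℤ)^u.val = -1 := by revert u; decide

/-- For a proper Eulerian hypergraph `H` with incidence matrix `M` and a magic
assignment `α`, if `w_min` is the minimum Hamming weight on the affine space
`c(α) + row(M)`, then the noncontextual bound of `α` is `|E| - 2 w_min`. -/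
theorem stmt2 {V E : Type*} [Fintype V] [LinearOrder V] [Fintype E]
    (edge : E → Finset V) (hH : ProperEulerian edge)
    (d : ℕ) (hd : 1 ≤ d) (α : V → Matrix (Fin d) (Fin d) ℂ)
    (hα : IsMagicAssignment edge α)
    (wmin : ℕ)
    (hw : IsLeast {w : ℕ | ∃ x : V → ZMod 2,
        w = hWeight (cvec edge α + Matrix.vecMul x (incMatrix edge))} wmin) :
    IsGreatest {b : ℤ | ∃ a : V → ℤ, (∀ v, a v = 1 ∨ a v = -1) ∧
        b = ∑ e : E, (-1 : ℤ) ^ (cvec edge α e).val * ∏ v ∈ edge e, a v}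
      ((Fintype.card E : ℤ) - 2 * wmin) := by
  classical
  set c := cvec edge α with hc
  constructor
  · obtain ⟨x, hx⟩ := hw.1
    refine ⟨fun v => (-1:ℤ)^(x v).val, fun v => chi_pm (x v), ?_⟩
    have hk := key edge c x
    rw [← hx] at hk
    simpa using hk.symm
  · rintro b ⟨a, ha, hb⟩
    set x : V → ZMod 2 := fun v => if a v = 1 then 0 else 1 with hxdef
    have hav : ∀ v, a v = (-1:ℤ)^(x v).val := by
      intro v
      rcases ha v with h | h <;> simp [hxdef, h] <;> decide
    have hb' : b = (Fintype.card E : ℤ) - 2 * hWeight (c + Matrix.vecMul x (incMatrix edge)) := by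
      rw [hb, ← key edge c x]
      exact Finset.sum_congr rfl fun e _ => by
        rw [Finset.prod_congr rfl fun v _ => hav v]
    have hle : wmin ≤ hWeight (c + Matrix.vecMul x (incMatrix edge)) :=
      hw.2 ⟨x, rfl⟩
    rw [hb']
    have : (wmin : ℤ) ≤ (hWeight (c + Matrix.vecMul x (incMatrix edge)) : ℤ) :=
      Int.ofNat_le.mpr hle
    linarith
end

section
/- Let H = (V,E) be a proper Eulerian hypergraph admitting at least one magic assignment, with incidence matrix M. Let Γ = {c(ᾱ) + row(M) : ᾱ a magic assignment of H} be the set of cosets of row(M) in (ZMod 2)^E containing the sign vector of some magic assignment, for a coset C let w(C) denote the minimum Hamming weight over elements of C, and let N = max_{C ∈ Γ} w(C). Define the noncontextual bound of H as b(H) = min over all magic assignments ᾱ of H of b_{ᾱ}(H). Then b(H) = |E| − 2N. -/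
open Matrix Finset

/-! ### Auxiliary lemmas for `stmt3` -/

private lemma sgn_add' (s t : ZMod 2) :
    ((-1 : ℤ)) ^ ((s + t).val) = (-1 : ℤ) ^ s.val * (-1 : ℤ) ^ t.val := by
  revert s t; decide

private lemma prod_sgn' {V : Type*} (s : Finset V) (x : V → ZMod 2) :
    ∏ v ∈ s, ((-1 : ℤ)) ^ ((x v).val) = (-1 : ℤ) ^ ((∑ v ∈ s, x v).val) := by
  induction s using Finset.cons_induction with
  | empty => simp
  | cons a s ha ih => rw [Finset.prod_cons, Finset.sum_cons, sgn_add', ih]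

private lemma sum_sgn' {E : Type*} [Fintype E] (y : E → ZMod 2) :
    ∑ e : E, ((-1 : ℤ)) ^ ((y e).val) = (Fintype.card E : ℤ) - 2 * hWeight y := by
  classical
  have h : ∀ t : ZMod 2, ((-1 : ℤ)) ^ t.val
      = 1 - 2 * (if t ≠ 0 then (1 : ℤ) else 0) := by decide
  calc ∑ e : E, ((-1 : ℤ)) ^ ((y e).val)
      = ∑ e : E, (1 - 2 * (if y e ≠ 0 then (1 : ℤ) else 0)) :=
        Finset.sum_congr rfl fun e _ => h (y e)
    _ = (Fintype.card E : ℤ) - 2 * hWeight y := by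
        rw [Finset.sum_sub_distrib, ← Finset.mul_sum, Finset.sum_boole, Finset.sum_const,
          Finset.card_univ, hWeight]
        simp

private lemma vecMul_inc' {V E : Type*} [Fintype V] [DecidableEq V] (edge : E → Finset V)
    (x : V → ZMod 2) (e : E) :
    Matrix.vecMul x (incMatrix edge) e = ∑ v ∈ edge e, x v := by
  classical
  simp only [Matrix.vecMul, dotProduct, incMatrix, Matrix.of_apply, mul_ite, mul_one,
    mul_zero]
  rw [Finset.sum_ite_mem, Finset.univ_inter]

private lemma value_formula' {V E : Type*} [Fintype V] [LinearOrder V] [Fintype E]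
    (edge : E → Finset V) (c : E → ZMod 2) (a : V → ℤ) (x : V → ZMod 2)
    (hax : ∀ v, a v = (-1 : ℤ) ^ ((x v).val)) :
    ∑ e : E, (-1 : ℤ) ^ (c e).val * ∏ v ∈ edge e, a v
      = (Fintype.card E : ℤ) - 2 * hWeight (c + Matrix.vecMul x (incMatrix edge)) := by
  rw [← sum_sgn']
  refine Finset.sum_congr rfl fun e _ => ?_
  have : ∏ v ∈ edge e, a v = (-1 : ℤ) ^ ((∑ v ∈ edge e, x v).val) := by
    rw [← prod_sgn']
    exact Finset.prod_congr rfl fun v _ => hax v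
  rw [this, Pi.add_apply, vecMul_inc', sgn_add']

private lemma greatest_of_least' {V E : Type*} [Fintype V] [LinearOrder V] [Fintype E]
    (edge : E → Finset V) (c : E → ZMod 2) (m : ℕ)
    (hm : IsLeast {w : ℕ | ∃ x : V → ZMod 2,
        w = hWeight (c + Matrix.vecMul x (incMatrix edge))} m) :
    IsGreatest {x : ℤ | ∃ a : V → ℤ, (∀ v, a v = 1 ∨ a v = -1) ∧
        x = ∑ e : E, (-1 : ℤ) ^ (c e).val * ∏ v ∈ edge e, a v}
      ((Fintype.card E : ℤ) - 2 * m) := by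
  classical
  constructor
  · obtain ⟨x, hx⟩ := hm.1
    refine ⟨fun v => (-1 : ℤ) ^ ((x v).val), fun v => ?_, ?_⟩
    · have h2 : (x v).val < 2 := ZMod.val_lt (x v)
      interval_cases h : (x v).val <;> simp [h]
    · rw [value_formula' edge c _ x (fun v => rfl), ← hx]
  · rintro b ⟨a, hA, rfl⟩
    set x : V → ZMod 2 := fun v => if a v = 1 then 0 else 1 with hxdef
    have hax : ∀ v, a v = (-1 : ℤ) ^ ((x v).val) := by
      intro v
      rcases hA v with h | h <;> simp only [hxdef, h] <;> decide
    rw [value_formula' edge c a x hax]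
    have hle : m ≤ hWeight (c + Matrix.vecMul x (incMatrix edge)) := hm.2 ⟨x, rfl⟩
    have : (m : ℤ) ≤ (hWeight (c + Matrix.vecMul x (incMatrix edge)) : ℤ) := by
      exact_mod_cast hle
    linarith

/-- The noncontextual bound of a proper Eulerian hypergraph `H` admitting a
magic assignment equals `|E| - 2N`, where `N` is the maximum over cosets `c(α) + row(M)`
(for magic assignments `α`) of the minimum Hamming weight in the coset. -/
theorem stmt3 {V E : Type*} [Fintype V] [LinearOrder V] [Fintype E]
    (edge : E → Finset V) (hH : ProperEulerian edge)
    (hex : ∃ (d : ℕ) (α : V → Matrix (Fin d) (Fin d) ℂ), 1 ≤ d ∧ IsMagicAssignment edge α)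
    (N : ℕ)
    (hN : IsGreatest {n : ℕ |
        ∃ (d : ℕ) (α : V → Matrix (Fin d) (Fin d) ℂ), 1 ≤ d ∧ IsMagicAssignment edge α ∧
          IsLeast {w : ℕ | ∃ x : V → ZMod 2,
            w = hWeight (cvec edge α + Matrix.vecMul x (incMatrix edge))} n} N) :
    IsLeast {b : ℤ |
        ∃ (d : ℕ) (α : V → Matrix (Fin d) (Fin d) ℂ), 1 ≤ d ∧ IsMagicAssignment edge α ∧
          IsGreatest {x : ℤ | ∃ a : V → ℤ, (∀ v, a v = 1 ∨ a v = -1) ∧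
            x = ∑ e : E, (-1 : ℤ) ^ (cvec edge α e).val * ∏ v ∈ edge e, a v} b}
      ((Fintype.card E : ℤ) - 2 * N) := by
  classical
  constructor
  · obtain ⟨d, α, hd, hmag, hleast⟩ := hN.1
    exact ⟨d, α, hd, hmag, greatest_of_least' edge (cvec edge α) N hleast⟩
  · rintro b ⟨d, α, hd, hmag, hgr⟩
    set W : Set ℕ := {w : ℕ | ∃ x : V → ZMod 2,
        w = hWeight (cvec edge α + Matrix.vecMul x (incMatrix edge))} with hWdef
    have hne : W.Nonempty := ⟨_, 0, rfl⟩
    have hleast : IsLeast W (sInf W) := ⟨Nat.sInf_mem hne, fun w hw => Nat.sInf_le hw⟩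
    have hmN : sInf W ≤ N := hN.2 ⟨d, α, hd, hmag, hleast⟩
    have hbg := greatest_of_least' edge (cvec edge α) (sInf W) hleast
    have hb : b = (Fintype.card E : ℤ) - 2 * sInf W := hgr.unique hbg
    have : ((sInf W : ℕ) : ℤ) ≤ (N : ℤ) := by exact_mod_cast hmN
    linarith
end

section
/- Let H = (V,E) be a proper Eulerian hypergraph and let M be a valid Gram matrix for H whose rank over ZMod 2 equals 2k for some k ≥ 0. Then every assignment α : V → (ZMod 2)^{2k} respecting M (i.e., whose Gram matrix equals M) is a valid assignment for H. Moreover, for any subset S ⊆ V, if the rows of M indexed by S sum to zero over ZMod 2, then Σ_{v∈S} α(v) = 0. -/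
open Matrix Finset

def Jmat (k : ℕ) : Matrix (Fin k ⊕ Fin k) (Fin k ⊕ Fin k) (ZMod 2) :=
  Matrix.fromBlocks 0 1 1 0

lemma Jmat_mul_Jmat (k : ℕ) : Jmat k * Jmat k = 1 := by
  simp [Jmat, Matrix.fromBlocks_multiply, ← Matrix.fromBlocks_one]

lemma sympl_eq (k : ℕ) (s t : Fin k ⊕ Fin k → ZMod 2) :
    sympl k s t = s ⬝ᵥ (Jmat k *ᵥ t) := by
  simp [sympl, Jmat, dotProduct, Matrix.mulVec, Fintype.sum_sum_type,
    Matrix.fromBlocks, Matrix.one_apply, Finset.sum_add_distrib,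
    Finset.mul_sum, mul_ite, Finset.sum_ite_eq', Finset.sum_ite_eq]

/-- If `M` is a valid Gram matrix of a proper Eulerian hypergraph of rank
`2k` over `ZMod 2`, then any assignment `α : V → (ZMod 2)^{2k}` respecting `M` is a valid
assignment; moreover any set of rows of `M` summing to zero forces the corresponding values of
`α` to sum to zero. -/
theorem stmt9 {V E : Type*} [Fintype V] [DecidableEq V] [Fintype E]
    (edge : E → Finset V) (hH : ProperEulerian edge)
    (M : Matrix V V (ZMod 2)) (hM : IsValidGram edge M)
    (k : ℕ) (hrank : M.rank = 2 * k)
    (α : V → (Fin k ⊕ Fin k → ZMod 2))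
    (hα : ∀ u v : V, M u v = sympl k (α u) (α v)) :
    ((∀ e : E, ∀ u ∈ edge e, ∀ v ∈ edge e, sympl k (α u) (α v) = 0) ∧
        (∀ e : E, ∑ v ∈ edge e, α v = 0)) ∧
      ∀ S : Finset V, (∀ w : V, ∑ v ∈ S, M v w = 0) → ∑ v ∈ S, α v = 0 := by
    classical
  set A : Matrix V (Fin k ⊕ Fin k) (ZMod 2) := Matrix.of fun v i => α v i with hA
  have hMA : M = A * Jmat k * Aᵀ := by
    ext u v
    rw [hα u v, sympl_eq, Matrix.mul_assoc]
    simp [Matrix.mul_apply, Matrix.mulVec, dotProduct, hA, Finset.mul_sum]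
  -- rank of Aᵀ
  have hcard : Fintype.card (Fin k ⊕ Fin k) = 2 * k := by
    simp [two_mul]
  have hrAt : Aᵀ.rank = 2 * k := by
    refine le_antisymm (Aᵀ.rank_le_card_height.trans_eq hcard) ?_
    calc 2 * k = M.rank := hrank.symm
      _ ≤ Aᵀ.rank := by rw [hMA]; exact Matrix.rank_mul_le_right _ _
  have hsurj : Function.Surjective Aᵀ.mulVecLin := by
    rw [← LinearMap.range_eq_top]
    apply Submodule.eq_top_of_finrank_eq
    rw [← Matrix.rank, hrAt, Module.finrank_pi, hcard]
  -- key step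
  have key : ∀ S : Finset V, (∀ w : V, ∑ v ∈ S, M v w = 0) → ∑ v ∈ S, α v = 0 := by
    intro S hS
    set s : Fin k ⊕ Fin k → ZMod 2 := ∑ v ∈ S, α v with hs
    have h1 : ∀ w : V, (s ᵥ* Jmat k) ⬝ᵥ α w = 0 := by
      intro w
      have h0 : ∑ v ∈ S, sympl k (α v) (α w) = 0 := by
        rw [show (∑ v ∈ S, sympl k (α v) (α w)) = ∑ v ∈ S, M v w from
          Finset.sum_congr rfl fun v _ => (hα v w).symm]
        exact hS w
      have : s ⬝ᵥ (Jmat k *ᵥ α w) = 0 := by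
        rw [hs, show (∑ v ∈ S, α v) ⬝ᵥ (Jmat k *ᵥ α w)
            = ∑ v ∈ S, (α v) ⬝ᵥ (Jmat k *ᵥ α w) by
          simp only [dotProduct, Finset.sum_apply, Finset.sum_mul]
          exact Finset.sum_comm]
        calc ∑ v ∈ S, (α v) ⬝ᵥ (Jmat k *ᵥ α w)
            = ∑ v ∈ S, sympl k (α v) (α w) :=
              Finset.sum_congr rfl fun v _ => (sympl_eq k _ _).symm
          _ = 0 := h0
      rwa [Matrix.dotProduct_mulVec] at this
    have h2 : ∀ t : Fin k ⊕ Fin k → ZMod 2, s ⬝ᵥ (Jmat k *ᵥ t) = 0 := by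
      intro t
      obtain ⟨c, hc⟩ := hsurj t
      have hct : Aᵀ *ᵥ c = t := hc
      rw [← hct, Matrix.dotProduct_mulVec, Matrix.dotProduct_mulVec]
      have hz : (s ᵥ* Jmat k) ᵥ* Aᵀ = 0 := by
        funext w
        have hw := h1 w
        simpa [Matrix.vecMul, dotProduct, hA] using hw
      rw [hz, zero_dotProduct]
    funext i
    have := h2 (Jmat k *ᵥ Pi.single i 1)
    rw [Matrix.mulVec_mulVec, Jmat_mul_Jmat, Matrix.one_mulVec] at this
    simpa using this
  refine ⟨⟨fun e u hu v hv => by rw [← hα]; exact hM.2.2.1 e u hu v hv,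
    fun e => key (edge e) (hM.2.2.2 e)⟩, key⟩
end

section
/- Let H = (V,E) be a proper Eulerian hypergraph with incidence matrix M and let ᾱ and ᾱ' be two magic assignments of H. If c(ᾱ) − c(ᾱ') ∈ row(M), then b_{ᾱ}(H) = b_{ᾱ'}(H). -/
open Matrix Finset

/-! Flipping a classical assignment at the vertices where `x = 1` multiplies the sign of every
hyperedge `e` by `(-1) ^ (xᵀM)_e`. So if `c - c' = xᵀM`, this gauge transformation turns the signed
sums for `c` into those for `c'` and vice versa: both sign vectors realise the same set of
classical values, hence have the same maximum. -/

/-- The noncontextual bound `b_α(H)` is the greatest element of `classicalValues edge (cvec edge α)`. -/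
def classicalValues {V E : Type*} [Fintype E] (edge : E → Finset V) (c : E → ZMod 2) : Set ℤ :=
  {x | ∃ a : V → ℤ, (∀ v, a v = 1 ∨ a v = -1) ∧
    x = ∑ e : E, (-1 : ℤ) ^ (c e).val * ∏ v ∈ edge e, a v}

lemma vecMul_incMatrix_apply {V E : Type*} [Fintype V] [DecidableEq V] (edge : E → Finset V)
    (x : V → ZMod 2) (e : E) : (x ᵥ* incMatrix edge) e = ∑ v ∈ edge e, x v := by
  simp only [vecMul, dotProduct, incMatrix, of_apply, mul_ite, mul_one, mul_zero,
    sum_ite_mem, univ_inter]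

lemma neg_one_pow_val_add (a b : ZMod 2) :
    (-1 : ℤ) ^ (a + b).val = (-1) ^ a.val * (-1) ^ b.val := by
  revert a b; decide

lemma prod_neg_one_pow_val {ι : Type*} (s : Finset ι) (x : ι → ZMod 2) :
    ∏ i ∈ s, (-1 : ℤ) ^ (x i).val = (-1) ^ (∑ i ∈ s, x i).val := by
  induction s using Finset.cons_induction with
  | empty => simp
  | cons i s hi ih => rw [prod_cons, sum_cons, ih, neg_one_pow_val_add]

lemma classicalValues_subset_of_sub_eq_vecMul {V E : Type*} [Fintype V] [DecidableEq V]
    [Fintype E] (edge : E → Finset V) {c c' : E → ZMod 2} {x : V → ZMod 2}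
    (h : c - c' = x ᵥ* incMatrix edge) : classicalValues edge c ⊆ classicalValues edge c' := by
  rintro _ ⟨a, ha, rfl⟩
  refine ⟨fun v => a v * (-1) ^ (x v).val, fun v => ?_, sum_congr rfl fun e _ => ?_⟩
  · rcases ha v with h₁ | h₁ <;> rcases neg_one_pow_eq_or ℤ (x v).val with h₂ | h₂ <;>
      simp [h₁, h₂]
  · have hce : c e = c' e + ∑ v ∈ edge e, x v := by
      rw [← vecMul_incMatrix_apply, ← h, Pi.sub_apply, add_sub_cancel]
    rw [prod_mul_distrib, prod_neg_one_pow_val, hce, neg_one_pow_val_add]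
    ring

lemma classicalValues_eq_of_sub_eq_vecMul {V E : Type*} [Fintype V] [DecidableEq V]
    [Fintype E] (edge : E → Finset V) {c c' : E → ZMod 2} {x : V → ZMod 2}
    (h : c - c' = x ᵥ* incMatrix edge) : classicalValues edge c = classicalValues edge c' :=
  (classicalValues_subset_of_sub_eq_vecMul edge h).antisymm <|
    classicalValues_subset_of_sub_eq_vecMul edge (x := -x) <| by
      rw [neg_vecMul, ← h, neg_sub]

theorem stmt13_general {V E : Type*} [Fintype V] [LinearOrder V] [Fintype E]
    (edge : E → Finset V)
    (d d' : ℕ)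
    (α : V → Matrix (Fin d) (Fin d) ℂ) (α' : V → Matrix (Fin d') (Fin d') ℂ)
    (hrow : ∃ x : V → ZMod 2,
      cvec edge α - cvec edge α' = Matrix.vecMul x (incMatrix edge)) :
    ∀ b b' : ℤ,
      IsGreatest {x : ℤ | ∃ a : V → ℤ, (∀ v, a v = 1 ∨ a v = -1) ∧
        x = ∑ e : E, (-1 : ℤ) ^ (cvec edge α e).val * ∏ v ∈ edge e, a v} b →
      IsGreatest {x : ℤ | ∃ a : V → ℤ, (∀ v, a v = 1 ∨ a v = -1) ∧
        x = ∑ e : E, (-1 : ℤ) ^ (cvec edge α' e).val * ∏ v ∈ edge e, a v} b' →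
      b = b' := by
  intro b b' hb hb'
  obtain ⟨x, hx⟩ := hrow
  have hb₀ : IsGreatest (classicalValues edge (cvec edge α)) b := hb
  rw [classicalValues_eq_of_sub_eq_vecMul edge hx] at hb₀
  exact hb₀.unique hb'

/-- If two magic assignments of a proper Eulerian hypergraph have sign
vectors differing by an element of the row space of the incidence matrix, then they have the
same noncontextual bound. -/
theorem stmt13 {V E : Type*} [Fintype V] [LinearOrder V] [Fintype E]
    (edge : E → Finset V) (hH : ProperEulerian edge)
    (d d' : ℕ) (hd : 1 ≤ d) (hd' : 1 ≤ d')
    (α : V → Matrix (Fin d) (Fin d) ℂ) (α' : V → Matrix (Fin d') (Fin d') ℂ)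
    (hα : IsMagicAssignment edge α) (hα' : IsMagicAssignment edge α')
    (hrow : ∃ x : V → ZMod 2,
      cvec edge α - cvec edge α' = Matrix.vecMul x (incMatrix edge)) :
    ∀ b b' : ℤ,
      IsGreatest {x : ℤ | ∃ a : V → ℤ, (∀ v, a v = 1 ∨ a v = -1) ∧
        x = ∑ e : E, (-1 : ℤ) ^ (cvec edge α e).val * ∏ v ∈ edge e, a v} b →
      IsGreatest {x : ℤ | ∃ a : V → ℤ, (∀ v, a v = 1 ∨ a v = -1) ∧
        x = ∑ e : E, (-1 : ℤ) ^ (cvec edge α' e).val * ∏ v ∈ edge e, a v} b' →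
      b = b' :=
  stmt13_general edge d d' α α' hrow
end

section
/- Let H = (V,E) be a hypergraph, d ≥ 1, c ∈ (ZMod 2)^E, and let β : V → M_d(ℂ) be such that each β(v) is Hermitian, β(v)² = I, the matrices β(u) and β(v) commute for all u,v ∈ V, and Π_{v∈e} β(v) = (−1)^{c_e}·I for every hyperedge e ∈ E. Then there exists a classical assignment a : V → {1,−1} with Π_{v∈e} a(v) = (−1)^{c_e} for all e ∈ E; equivalently, c lies in the row space of the incidence matrix of H. -/
open Matrix Finset

private lemma sortProd' {V : Type*} [LinearOrder V] {M : Type*} [CommMonoid M]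
    (f : V → M) (e : Finset V) :
    ((e.sort (· ≤ ·)).map f).prod = ∏ v ∈ e, f v := by
  rw [← Multiset.prod_coe, ← Multiset.map_coe, Finset.sort_eq]
  rfl

private lemma zmodCastVal' : ∀ z : ZMod 2, ((z.val : ℕ) : ZMod 2) = z := by decide

private lemma negOnePowCast' {N M : ℕ} (h : (-1 : ℤ) ^ N = (-1 : ℤ) ^ M) :
    ((N : ZMod 2) = (M : ZMod 2)) := by
  have key : ∀ n : ℕ, Even n → ((n : ZMod 2) = 0) := by
    rintro n ⟨k, rfl⟩; push_cast; ring_nf; simp [show ((2:ZMod 2)) = 0 from rfl]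
  have key1 : ∀ n : ℕ, Odd n → ((n : ZMod 2) = 1) := by
    rintro n ⟨k, rfl⟩; push_cast; simp [show ((2:ZMod 2)) = 0 from rfl]
  rcases Nat.even_or_odd N with hN | hN <;> rcases Nat.even_or_odd M with hM | hM
  · rw [key N hN, key M hM]
  · rw [hN.neg_one_pow, hM.neg_one_pow] at h; norm_num at h
  · rw [hN.neg_one_pow, hM.neg_one_pow] at h; norm_num at h
  · rw [key1 N hN, key1 M hM]

set_option maxHeartbeats 1000000 in
/-- If pairwise-commuting Hermitian matrices squaring to the identity realize
the hyperedge products `(-1)^{c_e}·I`, then some classical assignment realizes the same signs;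
equivalently `c` lies in the row space of the incidence matrix. -/
theorem stmt16 {V E : Type*} [Fintype V] [LinearOrder V] [Fintype E]
    (edge : E → Finset V) (d : ℕ) (hd : 1 ≤ d) (c : E → ZMod 2)
    (β : V → Matrix (Fin d) (Fin d) ℂ)
    (hherm : ∀ v, (β v).IsHermitian) (hsq : ∀ v, β v * β v = 1)
    (hcomm : ∀ u v : V, Commute (β u) (β v))
    (hprod : ∀ e : E, edgeProd β (edge e) = ((-1 : ℂ) ^ (c e).val) • 1) :
    (∃ a : V → ℤ, (∀ v, a v = 1 ∨ a v = -1) ∧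
        ∀ e : E, (∏ v ∈ edge e, a v) = (-1 : ℤ) ^ (c e).val) ∧
      (∃ x : V → ZMod 2, c = Matrix.vecMul x (incMatrix edge)) := by
  classical
  haveI : NeZero d := ⟨by omega⟩
  set A := Algebra.adjoin ℂ (Set.range β) with hA
  letI : CommRing A := Algebra.adjoinCommRingOfComm ℂ
    (by rintro _ ⟨u, rfl⟩ _ ⟨v, rfl⟩; exact hcomm u v)
  haveI : Module.Finite ℂ A := inferInstance
  haveI : Nontrivial A := ⟨1, 0, fun h => by
    have : ((1 : A) : Matrix (Fin d) (Fin d) ℂ) = ((0 : A) : _) := by rw [h]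
    simp at this⟩
  obtain ⟨m, hm⟩ := Ideal.exists_maximal A
  letI : Field (A ⧸ m) := Ideal.Quotient.field m
  haveI : Module.Finite ℂ (A ⧸ m) :=
    Module.Finite.of_surjective (Ideal.Quotient.mkₐ ℂ m).toLinearMap
      (Ideal.Quotient.mk_surjective)
  haveI : Algebra.IsIntegral ℂ (A ⧸ m) := Algebra.IsIntegral.of_finite ℂ _
  have hbij : Function.Bijective (algebraMap ℂ (A ⧸ m)) :=
    ⟨(algebraMap ℂ (A ⧸ m)).injective,
      IsAlgClosed.algebraMap_bijective_of_isIntegral.2⟩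
  let ψ := RingEquiv.ofBijective (algebraMap ℂ (A ⧸ m)) hbij
  let φ : A →+* ℂ := (ψ.symm : (A ⧸ m) →+* ℂ).comp (Ideal.Quotient.mk m)
  have hφ : ∀ z : ℂ, φ (algebraMap ℂ A z) = z := by
    intro z
    have h1 : (Ideal.Quotient.mk m) (algebraMap ℂ A z) = algebraMap ℂ (A ⧸ m) z := rfl
    simp only [φ, RingHom.comp_apply, h1]
    exact ψ.symm_apply_apply z
  set βA : V → A := fun v => ⟨β v, Algebra.subset_adjoin ⟨v, rfl⟩⟩ with hβA
  set a' : V → ℂ := fun v => φ (βA v) with ha'def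
  have ha'sq : ∀ v, a' v * a' v = 1 := by
    intro v
    have h2 : βA v * βA v = 1 := Subtype.ext (hsq v)
    calc a' v * a' v = φ (βA v * βA v) := (map_mul φ _ _).symm
    _ = 1 := by rw [h2, _root_.map_one]
  have ha' : ∀ v, a' v = 1 ∨ a' v = -1 := fun v => mul_self_eq_one_iff.mp (ha'sq v)
  have hedge : ∀ e : E, (∏ v ∈ edge e, a' v) = (-1 : ℂ) ^ (c e).val := by
    intro e
    have h1 : ((((edge e).sort (· ≤ ·)).map βA).prod : Matrix (Fin d) (Fin d) ℂ)
        = edgeProd β (edge e) := by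
      rw [edgeProd]
      show A.subtype (((edge e).sort (· ≤ ·)).map βA).prod = _
      rw [map_list_prod, List.map_map]
      rfl
    have h2 : (((edge e).sort (· ≤ ·)).map βA).prod
        = algebraMap ℂ A ((-1 : ℂ) ^ (c e).val) := by
      apply Subtype.ext
      rw [h1, hprod e]
      simp [Algebra.algebraMap_eq_smul_one]
    calc ∏ v ∈ edge e, a' v = (((edge e).sort (· ≤ ·)).map a').prod :=
          (sortProd' a' _).symm
    _ = ((((edge e).sort (· ≤ ·)).map βA).map φ).prod := by rw [List.map_map]; rfl
    _ = φ ((((edge e).sort (· ≤ ·)).map βA).prod) := (map_list_prod (φ : A →* ℂ) _).symm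
    _ = (-1 : ℂ) ^ (c e).val := by rw [h2]; exact hφ _
  set a : V → ℤ := fun v => if a' v = 1 then 1 else -1 with hadef
  set x : V → ZMod 2 := fun v => if a' v = 1 then 0 else 1 with hxdef
  have hne : (-1 : ℂ) ≠ 1 := by norm_num
  have hval1 : (1 : ZMod 2).val = 1 := rfl
  have hax : ∀ v, ((a v : ℤ) : ℂ) = a' v := by
    intro v; rcases ha' v with h | h <;> simp [hadef, h, hne]
  have haInt : ∀ e : E, ∏ v ∈ edge e, a v = (-1 : ℤ) ^ (c e).val := by
    intro e
    have hc : ((∏ v ∈ edge e, a v : ℤ) : ℂ) = (((-1 : ℤ) ^ (c e).val : ℤ) : ℂ) := by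
      push_cast
      rw [← hedge e]
      exact Finset.prod_congr rfl fun v _ => hax v
    exact_mod_cast hc
  have hvals : ∀ v, a v = (-1 : ℤ) ^ ((x v).val) := by
    intro v; rcases ha' v with h | h <;>
      simp [hadef, hxdef, h, hne, hval1]
  refine ⟨⟨a, fun v => by rcases ha' v with h | h <;> simp [hadef, h, hne], haInt⟩, ⟨x, ?_⟩⟩
  funext e
  have hsum : Matrix.vecMul x (incMatrix edge) e = ∑ v ∈ edge e, x v := by
    simp [Matrix.vecMul, dotProduct, incMatrix, mul_ite, mul_one, mul_zero,
      Finset.sum_ite_mem]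
  rw [hsum]
  have hpow : (-1 : ℤ) ^ ((c e).val) = (-1 : ℤ) ^ (∑ v ∈ edge e, (x v).val) := by
    rw [← Finset.prod_pow_eq_pow_sum, ← haInt e]
    exact Finset.prod_congr rfl fun v _ => hvals v
  have := negOnePowCast' hpow
  rw [zmodCastVal'] at this
  rw [this]
  push_cast
  exact Finset.sum_congr rfl fun v _ => zmodCastVal' (x v)
end
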